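/- arXiv:1711.01465 — 3 statements merged into one kernel-verified Lean document; each statement's English description precedes it below -/
import Mathlib

section
/- If H is a connected unbalanced graph, then γ(H) < 1/m(H), where m(H) = max over nonempty subgraphs H1 ⊆ H of |E(H1)|/|V(H1)| and γ(H) is the minimum of (|V(H)|-|V(H1)|)/(|E(H1)|(|V(H)|-1) - |E(H)|(|V(H1)|-1)) over proper subgraphs H1 of H for which the denominator is positive. -/
/-!
Take `H1 = Hm` in the minimum defining `γ`. Writing `n, E` for the order and size of `H` and
`v, e` for those of `Hm`, the denominator is `(e n - E v) + (E - e) > 0`, and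
`v · (e(n-1) - E(v-1)) - e (n - v) = (v - 1)(e n - E v) > 0` because `Hm` has an edge, so `v ≥ 2`.
-/

open Finset

/-- The denominator `|E(H1)|(|V(H)|-1) - |E(H)|(|V(H1)|-1)` (as a real number) appearing in
the definition of the exponent `γ(H)`. -/
noncomputable def jdenom {V : Type*} [Fintype V] (H : SimpleGraph V) (H1 : H.Subgraph) : ℝ :=
  (H1.edgeSet.ncard : ℝ) * ((Fintype.card V : ℝ) - 1)
    - (H.edgeSet.ncard : ℝ) * ((H1.verts.ncard : ℝ) - 1)

/-- The value `(|V(H)|-|V(H1)|) / (|E(H1)|(|V(H)|-1) - |E(H)|(|V(H1)|-1))`. -/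
noncomputable def jval {V : Type*} [Fintype V] (H : SimpleGraph V) (H1 : H.Subgraph) : ℝ :=
  ((Fintype.card V : ℝ) - (H1.verts.ncard : ℝ)) / jdenom H H1

lemma sub_div_lt_div_of_mul_lt_mul {n v e E : ℝ} (hv : 1 < v) (he : 0 < e) (heE : e ≤ E)
    (hdense : E * v < e * n) :
    0 < e * (n - 1) - E * (v - 1) ∧ (n - v) / (e * (n - 1) - E * (v - 1)) < v / e := by
  have hD : 0 < e * (n - 1) - E * (v - 1) := by linarith
  refine ⟨hD, ?_⟩
  rw [div_lt_div_iff₀ hD he]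
  linear_combination mul_pos (sub_pos.mpr hv) (sub_pos.mpr hdense)

namespace SimpleGraph.Subgraph

variable {V : Type*} {H : SimpleGraph V}

lemma edgeSet_ncard_le [Finite V] (H1 : H.Subgraph) : H1.edgeSet.ncard ≤ H.edgeSet.ncard :=
  Set.ncard_le_ncard H1.edgeSet_subset H.edgeSet.toFinite

lemma one_lt_verts_ncard_of_edgeSet_nonempty [Finite V] {H1 : H.Subgraph}
    (h : H1.edgeSet.Nonempty) : 1 < H1.verts.ncard := by
  obtain ⟨e, he⟩ := h
  induction e with | h a b => ?_
  rw [Subgraph.mem_edgeSet] at he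
  exact (Set.one_lt_ncard H1.verts.toFinite).mpr ⟨a, he.fst_mem, b, he.snd_mem, he.ne⟩

variable [Fintype V]

lemma ne_top_of_density_lt {H1 : H.Subgraph}
    (hdense : (H.edgeSet.ncard : ℝ) * H1.verts.ncard < H1.edgeSet.ncard * Fintype.card V) :
    H1 ≠ ⊤ := by
  rintro rfl
  simp [mul_comm] at hdense

lemma jdenom_pos_and_jval_lt_of_density_lt {H1 : H.Subgraph}
    (hdense : (H.edgeSet.ncard : ℝ) * H1.verts.ncard < H1.edgeSet.ncard * Fintype.card V) :
    0 < jdenom H H1 ∧ jval H H1 < (H1.verts.ncard : ℝ) / H1.edgeSet.ncard := by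
  have he : (0 : ℝ) < H1.edgeSet.ncard :=
    pos_of_mul_pos_left ((by positivity : (0 : ℝ) ≤ _).trans_lt hdense) (Nat.cast_nonneg _)
  have hv : (1 : ℝ) < H1.verts.ncard := by
    exact_mod_cast one_lt_verts_ncard_of_edgeSet_nonempty
      (Set.nonempty_of_ncard_ne_zero (by exact_mod_cast he.ne'))
  exact sub_div_lt_div_of_mul_lt_mul hv he (by exact_mod_cast edgeSet_ncard_le H1) hdense

end SimpleGraph.Subgraph

open SimpleGraph.Subgraph in
theorem stmt4_general {V : Type*} [Fintype V] (H : SimpleGraph V)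
    (Hm : H.Subgraph)
    (hunb : (H.edgeSet.ncard : ℝ) * (Hm.verts.ncard : ℝ)
        < (Hm.edgeSet.ncard : ℝ) * (Fintype.card V : ℝ))
    (γ : ℝ)
    (hγmin : ∀ H2 : H.Subgraph, H2 ≠ ⊤ → 0 < jdenom H H2 → γ ≤ jval H H2) :
    γ < (Hm.verts.ncard : ℝ) / (Hm.edgeSet.ncard : ℝ) := by
  obtain ⟨hdenom, hlt⟩ := jdenom_pos_and_jval_lt_of_density_lt hunb
  exact (hγmin Hm (ne_top_of_density_lt hunb) hdenom).trans_lt hlt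

/-- If `H` is a connected unbalanced graph, then `γ(H) < 1/m(H)`.  Here `Hm` is a nonempty
subgraph attaining the maximal edge-vertex ratio `m(H) = |E(Hm)|/|V(Hm)|`, the unbalancedness
says `|E(Hm)|/|V(Hm)| > |E(H)|/|V(H)|`, and `γ` is the minimum of `jval` over proper subgraphs
with positive denominator. -/
theorem stmt4 {V : Type*} [Fintype V] (H : SimpleGraph V) (hconn : H.Connected)
    (Hm : H.Subgraph) (hmne : Hm.verts.Nonempty)
    (hmax : ∀ H2 : H.Subgraph, H2.verts.Nonempty →
      (H2.edgeSet.ncard : ℝ) * (Hm.verts.ncard : ℝ)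
        ≤ (Hm.edgeSet.ncard : ℝ) * (H2.verts.ncard : ℝ))
    (hunb : (H.edgeSet.ncard : ℝ) * (Hm.verts.ncard : ℝ)
        < (Hm.edgeSet.ncard : ℝ) * (Fintype.card V : ℝ))
    (γ : ℝ)
    (hγmem : ∃ H1 : H.Subgraph, H1 ≠ ⊤ ∧ 0 < jdenom H H1 ∧ γ = jval H H1)
    (hγmin : ∀ H2 : H.Subgraph, H2 ≠ ⊤ → 0 < jdenom H H2 → γ ≤ jval H H2) :
    γ < (Hm.verts.ncard : ℝ) / (Hm.edgeSet.ncard : ℝ) :=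
  stmt4_general H Hm hunb γ hγmin
end

section
/- Let G_n be a sequence of graphs colored uniformly with c_n colors, with c_n → ∞, and suppose E[T(K_{1,r}, G_n)] → ∞. Then Var(T(K_{1,r}, G_n)) = o( (E[T(K_{1,r}, G_n)])^2 ), and consequently T(K_{1,r}, G_n) / E[T(K_{1,r}, G_n)] → 1 in probability; in particular T(K_{1,r}, G_n) → ∞ in probability. -/
open Finset Filter

/-- The star graph `K_{1,r}` : one center (vertex `0`) joined to `r` leaves. -/
def starGraph (r : ℕ) : SimpleGraph (Fin (r + 1)) :=
  SimpleGraph.fromRel (fun i _ => i = 0)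

/-- Number of monochromatic copies of `F` in `G` under the coloring `f`. -/
noncomputable def monoCopyCount {α : Type*} (F : SimpleGraph α) {V : Type*} (G : SimpleGraph V)
    {c : ℕ} (f : V → Fin c) : ℕ :=
  Nat.card {A : G.Subgraph //
    Nonempty (A.coe ≃g F) ∧ ∀ u ∈ A.verts, ∀ v ∈ A.verts, f u = f v}

/-- Expected number of monochromatic copies of `F` in `G` in a uniform `c`-coloring. -/
noncomputable def meanMono {α : Type*} (F : SimpleGraph α) {V : Type*} [Fintype V]
    [DecidableEq V] (G : SimpleGraph V) (c : ℕ) : ℝ :=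
  (∑ f : V → Fin c, (monoCopyCount F G f : ℝ)) / (c : ℝ) ^ Fintype.card V

/-- Variance of the number of monochromatic copies of `F` in `G` in a uniform `c`-coloring. -/
noncomputable def varMono {α : Type*} (F : SimpleGraph α) {V : Type*} [Fintype V]
    [DecidableEq V] (G : SimpleGraph V) (c : ℕ) : ℝ :=
  (∑ f : V → Fin c, ((monoCopyCount F G f : ℝ) - meanMono F G c) ^ 2) /
    (c : ℝ) ^ Fintype.card V

/-!
Write `N` for the number of `r`-stars of `G`, `Δ` for its maximum degree and `μ = N / c ^ r` for
the mean. Expanding the variance over ordered pairs of stars, a pair sharing at most one vertex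
contributes nothing and a pair sharing `t ≥ 2` vertices contributes at most
`c ^ (t - 1) / c ^ (2 * r)`. A star containing a fixed `t`-set `U` has its centre in `U` or
adjacent to all of `U`, so a given star meets at most `C(r+1, t) (t + 1) Δ ^ (r + 1 - t)` stars in
exactly `t` vertices, whence `Var / μ² ≤ ∑ₜ C(r+1, t) (t + 1) Δ ^ (r + 1 - t) c ^ (t - 1) / N`.
The stars at a vertex of maximum degree give `Δ ^ r ≲ N`, so the `r`-th power of each summand
is `≲ μ ^ (1 - t) → 0`. Chebyshev's inequality turns `Var = o(μ²)` into the two concentration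
statements.
-/

section

open Classical

lemma tendsto_zero_of_tendsto_pow {ι : Type*} {l : Filter ι} {x : ι → ℝ} {r : ℕ}
    (hr : r ≠ 0) (hx : ∀ᶠ i in l, 0 ≤ x i) (h : Tendsto (fun i => x i ^ r) l (nhds 0)) :
    Tendsto x l (nhds 0) := by
  have := h.rpow_const (p := (r : ℝ)⁻¹) (.inr (by positivity))
  rw [Real.zero_rpow (by positivity)] at this
  exact this.congr' (hx.mono fun i hi => Real.pow_rpow_inv_natCast hi hr)

lemma card_lt_abs_sub_mul_sq_le {Ω : Type*} [Fintype Ω] (X : Ω → ℝ) (m : ℝ) {δ : ℝ}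
    (hδ : 0 ≤ δ) : (#{ω | δ < |X ω - m|} : ℝ) * δ ^ 2 ≤ ∑ ω, (X ω - m) ^ 2 := by
  calc (#{ω | δ < |X ω - m|} : ℝ) * δ ^ 2 = ∑ ω ∈ {ω | δ < |X ω - m|}, δ ^ 2 := by
        rw [sum_const, nsmul_eq_mul]
    _ ≤ ∑ ω ∈ {ω | δ < |X ω - m|}, (X ω - m) ^ 2 := sum_le_sum fun ω hω => by
        rw [← sq_abs (X ω - m)]
        exact pow_le_pow_left₀ hδ (mem_filter.1 hω).2.le 2
    _ ≤ ∑ ω, (X ω - m) ^ 2 := sum_le_sum_of_subset_of_nonneg (subset_univ _)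
        fun _ _ _ => sq_nonneg _

lemma card_filter_powersetCard_superset_le {α : Type*} [DecidableEq α] (s T : Finset α)
    (k : ℕ) :
    #{L ∈ s.powersetCard k | T ⊆ L} ≤ #s ^ (k - #T) := by
  calc #{L ∈ s.powersetCard k | T ⊆ L} ≤ #(s.powersetCard (k - #T)) := by
        refine card_le_card_of_injOn (· \ T) (fun L hL => ?_) fun L hL L' hL' h => ?_
        · simp only [coe_filter, mem_powersetCard, Set.mem_ofPred_eq] at hL
          rw [mem_coe, mem_powersetCard, ← hL.1.2]
          exact ⟨sdiff_subset.trans hL.1.1, card_sdiff_of_subset hL.2⟩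
        · simp only [coe_filter, mem_powersetCard, Set.mem_ofPred_eq] at hL hL'
          rw [← sdiff_union_of_subset hL.2, ← sdiff_union_of_subset hL'.2]
          exact congrArg (· ∪ T) h
    _ ≤ #s ^ (k - #T) := by rw [card_powersetCard]; exact Nat.choose_le_pow _ _

def IsConstOn {W α : Type*} (f : W → α) (S : Finset W) : Prop :=
  ∀ u ∈ S, ∀ v ∈ S, f u = f v

lemma isConstOn_and_isConstOn_iff_union {W α : Type*} [DecidableEq W] {S T : Finset W}
    (h : (S ∩ T).Nonempty) (f : W → α) :
    IsConstOn f S ∧ IsConstOn f T ↔ IsConstOn f (S ∪ T) := by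
  obtain ⟨z, hz⟩ := h
  rw [mem_inter] at hz
  refine ⟨fun ⟨hS, hT⟩ u hu v hv => ?_, fun h => ⟨?_, ?_⟩⟩
  · have key : ∀ x ∈ S ∪ T, f x = f z := fun x hx =>
      (mem_union.1 hx).elim (hS x · z hz.1) (hT x · z hz.2)
    rw [key u hu, key v hv]
  · exact fun u hu v hv => h u (mem_union_left _ hu) v (mem_union_left _ hv)
  · exact fun u hu v hv => h u (mem_union_right _ hu) v (mem_union_right _ hv)

section Colorings

variable {W : Type*} [Fintype W] [DecidableEq W] {c : ℕ}

lemma card_filter_eqOn_mul (S : Finset W) (g : W → Fin c) :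
    #{f : W → Fin c | ∀ v ∈ S, f v = g v} * c ^ #S = c ^ Fintype.card W := by
  have hcyl : ({f : W → Fin c | ∀ v ∈ S, f v = g v} : Finset _) =
      Fintype.piFinset fun v => if v ∈ S then {g v} else univ := by
    ext f
    simp only [mem_filter, mem_univ, true_and, Fintype.mem_piFinset]
    refine forall_congr' fun v => ?_
    split_ifs <;> simp_all
  have hcard : ∀ v, #(if v ∈ S then {g v} else univ) = if v ∈ S then 1 else c := by
    intro v; split_ifs <;> simp
  rw [hcyl, Fintype.card_piFinset]
  simp only [hcard, prod_ite, prod_const_one, prod_const, one_mul, ← pow_add]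
  rw [filter_not, filter_mem_eq_inter, univ_inter, card_sdiff_add_card_eq_card (subset_univ S),
    card_univ]

lemma card_filter_isConstOn_mul {S : Finset W} (hS : S.Nonempty) :
    #{f : W → Fin c | IsConstOn f S} * c ^ #S = c * c ^ Fintype.card W := by
  obtain ⟨s, hs⟩ := hS
  rw [card_eq_sum_card_fiberwise (f := fun f => f s) (t := univ) (by simp), sum_mul]
  have hfiber : ∀ a : Fin c, {f ∈ univ.filter fun f : W → Fin c => IsConstOn f S | f s = a} =
      ({f : W → Fin c | ∀ v ∈ S, f v = (fun _ => a) v} : Finset _) := by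
    intro a
    ext f
    simp only [mem_filter, mem_univ, true_and]
    exact ⟨fun ⟨hf, hfa⟩ v hv => hfa ▸ hf v hv s hs,
      fun h => ⟨fun u hu v hv => by rw [h u hu, h v hv], h s hs⟩⟩
  simp [hfiber, card_filter_eqOn_mul]

lemma card_filter_isConstOn_and_mul_le {S T : Finset W} (hS : S.Nonempty) (hT : T.Nonempty) :
    #{f : W → Fin c | IsConstOn f S ∧ IsConstOn f T} * c ^ #(S ∪ T) ≤
      c ^ 2 * c ^ Fintype.card W := by
  obtain ⟨s, hs⟩ := hS
  obtain ⟨t, ht⟩ := hT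
  rw [card_eq_sum_card_fiberwise (f := fun f => (f s, f t)) (t := univ) (by simp), sum_mul]
  have hfiber : ∀ p : Fin c × Fin c,
      {f ∈ univ.filter fun f : W → Fin c => IsConstOn f S ∧ IsConstOn f T |
          (f s, f t) = p} ⊆
        ({f : W → Fin c | ∀ v ∈ S ∪ T, f v = (fun v => if v ∈ S then p.1 else p.2) v} :
          Finset _) := by
    rintro ⟨a, b⟩ f hf
    simp only [mem_filter, mem_univ, true_and, Prod.mk.injEq] at hf ⊢
    obtain ⟨⟨hfS, hfT⟩, rfl, rfl⟩ := hf
    intro v hv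
    split_ifs with hvS
    · exact hfS v hvS s hs
    · exact hfT v ((mem_union.1 hv).resolve_left hvS) t ht
  calc _ ≤ ∑ p : Fin c × Fin c, c ^ Fintype.card W := sum_le_sum fun p _ =>
        (Nat.mul_le_mul_right _ (card_le_card (hfiber p))).trans_eq (card_filter_eqOn_mul _ _)
    _ = c ^ 2 * c ^ Fintype.card W := by simp [sq]

/-- For disjoint `S` and `T` the exponent `0 - 1` truncates to `0`, giving the bound of independent
events. -/
lemma card_filter_isConstOn_and_mul_pow_le {S T : Finset W} {r : ℕ} (hS : #S = r + 1)
    (hT : #T = r + 1) (hc : 0 < c) :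
    #{f : W → Fin c | IsConstOn f S ∧ IsConstOn f T} * c ^ (2 * r) ≤
      c ^ (#(S ∩ T) - 1) * c ^ Fintype.card W := by
  have hunion := card_union_add_card_inter S T
  rcases (S ∩ T).eq_empty_or_nonempty with hST | hST
  · have h := card_filter_isConstOn_and_mul_le (c := c) (card_pos.1 (by omega : 0 < #S))
      (card_pos.1 (by omega : 0 < #T))
    have hu : #(S ∪ T) = 2 * r + 2 := by rw [hST, card_empty] at hunion; omega
    rw [hST, card_empty, Nat.zero_sub, pow_zero, one_mul]
    refine Nat.le_of_mul_le_mul_right (c := c ^ 2) ?_ (pow_pos hc 2)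
    calc _ = #{f : W → Fin c | IsConstOn f S ∧ IsConstOn f T} * c ^ #(S ∪ T) := by
          rw [hu, pow_add, mul_assoc]
      _ ≤ c ^ 2 * c ^ Fintype.card W := h
      _ = c ^ Fintype.card W * c ^ 2 := mul_comm _ _
  · have h := card_filter_isConstOn_mul (c := c) (hST.mono inter_subset_union)
    have hexp : 2 * r + 1 = (#(S ∩ T) - 1) + #(S ∪ T) := by
      have := card_pos.2 hST
      omega
    rw [filter_congr fun f _ => isConstOn_and_isConstOn_iff_union hST f]
    refine (Nat.eq_of_mul_eq_mul_right (pow_pos hc #(S ∪ T)) ?_).le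
    calc _ = #{f : W → Fin c | IsConstOn f (S ∪ T)} * c ^ #(S ∪ T) * c ^ (2 * r) := by ring
      _ = c ^ Fintype.card W * c ^ (2 * r + 1) := by rw [h]; ring
      _ = _ := by rw [hexp]; ring

end Colorings

lemma starGraph_eq (r : ℕ) : starGraph r = SimpleGraph.starGraph 0 := rfl

lemma nonempty_iso_starGraph_iff {W W' : Type*} [Fintype W] [Fintype W'] [DecidableEq W']
    {H : SimpleGraph W} {w₀ : W'} :
    Nonempty (H ≃g SimpleGraph.starGraph w₀) ↔
      ∃ w, Fintype.card W = Fintype.card W' ∧ H = SimpleGraph.starGraph w := by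
  have hadj (e : W ≃ W') (x y : W) : (SimpleGraph.starGraph w₀).Adj (e x) (e y) ↔
      (SimpleGraph.starGraph (e.symm w₀)).Adj x y := by
    simp [e.injective.ne_iff, ← Equiv.eq_symm_apply]
  constructor
  · rintro ⟨φ⟩
    refine ⟨φ.symm w₀, Fintype.card_congr φ.toEquiv, ?_⟩
    ext x y
    exact φ.map_adj_iff.symm.trans (hadj φ.toEquiv x y)
  · rintro ⟨w, hcard, rfl⟩
    let e₀ := Fintype.equivOfCardEq hcard
    let e := e₀.trans (Equiv.swap (e₀ w) w₀)
    have hw : e.symm w₀ = w := by simp [e]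
    exact ⟨⟨e, fun {x y} => (hadj e x y).trans (by rw [hw])⟩⟩

lemma SimpleGraph.Subgraph.adj_iff_of_coe_eq_starGraph {V : Type*} {G : SimpleGraph V}
    {A : G.Subgraph} {w : A.verts} (hA : A.coe = SimpleGraph.starGraph w) (x y : V) :
    A.Adj x y ↔ x ∈ A.verts ∧ y ∈ A.verts ∧ x ≠ y ∧ (x = w ∨ y = w) := by
  have key : ∀ x (hx : x ∈ A.verts) y (hy : y ∈ A.verts),
      A.Adj x y ↔ x ≠ y ∧ (x = w ∨ y = w) := fun x hx y hy => by
    simpa [Subtype.ext_iff] using congrArg (fun H => H.Adj ⟨x, hx⟩ ⟨y, hy⟩) hA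
  refine ⟨fun h => ?_, fun ⟨hx, hy, h⟩ => (key x hx y hy).2 h⟩
  have hx := A.edge_vert h
  have hy := A.edge_vert h.symm
  exact ⟨hx, hy, (key x hx y hy).1 h⟩

section Stars

variable {V : Type*} [Fintype V] [DecidableEq V]

def starSubgraph (G : SimpleGraph V) (w : V) (L : Finset V) : G.Subgraph where
  verts := ↑(insert w L)
  Adj x y := G.Adj x y ∧ (x = w ∧ y ∈ L ∨ y = w ∧ x ∈ L)
  adj_sub h := h.1
  edge_vert := by rintro x y ⟨-, ⟨rfl, -⟩ | ⟨-, hx⟩⟩ <;> simp [*]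
  symm := ⟨fun _ _ h => ⟨h.1.symm, h.2.symm⟩⟩

noncomputable def stars (G : SimpleGraph V) (r : ℕ) : Finset G.Subgraph :=
  {A | Nonempty (A.coe ≃g starGraph r)}

variable {G : SimpleGraph V} {r : ℕ}

lemma card_verts_of_mem_stars {A : G.Subgraph} (hA : A ∈ stars G r) :
    #A.verts.toFinset = r + 1 := by
  obtain ⟨φ⟩ := (mem_filter.1 hA).2
  rw [Set.toFinset_card, Fintype.card_congr φ.toEquiv, Fintype.card_fin]

lemma exists_eq_starSubgraph_of_mem_stars {A : G.Subgraph} (hA : A ∈ stars G r) :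
    ∃ w, ∃ L ⊆ G.neighborFinset w, #L = r ∧ A = starSubgraph G w L := by
  rw [stars, mem_filter, starGraph_eq, nonempty_iso_starGraph_iff] at hA
  obtain ⟨-, ⟨w, hw⟩, hcard, hA⟩ := hA
  have hadj := A.adj_iff_of_coe_eq_starGraph hA
  refine ⟨w, A.verts.toFinset.erase w, fun x hx => ?_, ?_, ?_⟩
  · rw [mem_erase, Set.mem_toFinset] at hx
    exact (G.mem_neighborFinset w x).2
      (A.adj_sub ((hadj w x).2 ⟨hw, hx.2, hx.1.symm, .inl rfl⟩))
  · rw [card_erase_of_mem (Set.mem_toFinset.2 hw), Set.toFinset_card, hcard, Fintype.card_fin,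
      Nat.add_sub_cancel]
  · ext x y
    · simp [starSubgraph, hw]
    · simp only [starSubgraph, hadj, mem_erase, Set.mem_toFinset]
      constructor
      · rintro ⟨hx, hy, hne, rfl | rfl⟩
        · exact ⟨A.adj_sub ((hadj _ _).2 ⟨hx, hy, hne, .inl rfl⟩),
            .inl ⟨rfl, Ne.symm hne, hy⟩⟩
        · exact ⟨A.adj_sub ((hadj _ _).2 ⟨hx, hy, hne, .inr rfl⟩), .inr ⟨rfl, hne, hx⟩⟩
      · rintro ⟨-, ⟨rfl, hne, hy⟩ | ⟨rfl, hne, hx⟩⟩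
        · exact ⟨hw, hy, Ne.symm hne, .inl rfl⟩
        · exact ⟨hx, hw, hne, .inr rfl⟩

lemma starSubgraph_mem_stars {w : V} {L : Finset V} (hL : L ⊆ G.neighborFinset w)
    (hcard : #L = r) :
    starSubgraph G w L ∈ stars G r := by
  have hadjL : ∀ y ∈ L, G.Adj w y := fun y hy => (G.mem_neighborFinset w y).1 (hL hy)
  have hwL : w ∉ L := fun h => G.irrefl (hadjL w h)
  rw [stars, mem_filter, starGraph_eq, nonempty_iso_starGraph_iff]
  refine ⟨mem_univ _, ⟨w, by simp [starSubgraph]⟩, by simp [starSubgraph, hwL, hcard], ?_⟩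
  ext ⟨x, hx⟩ ⟨y, hy⟩
  simp only [starSubgraph, coe_insert, Set.mem_insert_iff, mem_coe] at hx hy
  simp only [SimpleGraph.Subgraph.coe_adj, starSubgraph, SimpleGraph.starGraph_adj, ne_eq,
    Subtype.ext_iff]
  constructor
  · rintro ⟨hG, ⟨rfl, -⟩ | ⟨rfl, -⟩⟩
    exacts [⟨hG.ne, .inl rfl⟩, ⟨hG.ne, .inr rfl⟩]
  · rintro ⟨hne, rfl | rfl⟩
    · have hyL := hy.resolve_left (Ne.symm hne)
      exact ⟨hadjL y hyL, .inl ⟨rfl, hyL⟩⟩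
    · have hxL := hx.resolve_left hne
      exact ⟨(hadjL x hxL).symm, .inr ⟨rfl, hxL⟩⟩

lemma card_stars_superset_le_sum (U : Finset V) :
    #{B ∈ stars G r | U ⊆ B.verts.toFinset} ≤
      ∑ w, #{L ∈ (G.neighborFinset w).powersetCard r | U ⊆ insert w L} := by
  rw [← card_sigma]
  refine card_le_card_of_surjOn (fun p => starSubgraph G p.1 p.2) fun B hB => ?_
  obtain ⟨hB, hUB⟩ := mem_filter.1 hB
  obtain ⟨w, L, hL, hcard, rfl⟩ := exists_eq_starSubgraph_of_mem_stars hB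
  refine ⟨⟨w, L⟩, ?_, rfl⟩
  simp_all [starSubgraph]

lemma card_filter_powersetCard_neighborFinset_le (U : Finset V) (w : V) :
    #{L ∈ (G.neighborFinset w).powersetCard r | U ⊆ insert w L} ≤
      G.maxDegree ^ (r - #(U.erase w)) := by
  simp only [subset_insert_iff]
  refine (card_filter_powersetCard_superset_le _ _ _).trans (Nat.pow_le_pow_left ?_ _)
  simpa using G.degree_le_maxDegree w

lemma sum_compl_card_filter_powersetCard_neighborFinset_le {U : Finset V} {u : V} (hu : u ∈ U) :
    ∑ w ∈ Uᶜ, #{L ∈ (G.neighborFinset w).powersetCard r | U ⊆ insert w L} ≤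
      G.maxDegree ^ (r + 1 - #U) := by
  set f := fun w => #{L ∈ (G.neighborFinset w).powersetCard r | U ⊆ insert w L}
  have hvanish : ∀ w ∈ Uᶜ, f w ≠ 0 → w ∈ G.neighborFinset u ∧ #U ≤ r := by
    intro w hw hfw
    obtain ⟨L, hL⟩ := card_ne_zero.1 hfw
    simp only [mem_filter, mem_powersetCard, subset_insert_iff,
      erase_eq_of_notMem (mem_compl.1 hw)] at hL
    have hwu := (G.mem_neighborFinset w u).1 (hL.1.1 (hL.2 hu))
    exact ⟨(G.mem_neighborFinset u w).2 hwu.symm, hL.1.2 ▸ card_le_card hL.2⟩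
  rcases le_or_gt #U r with h | h
  · calc ∑ w ∈ Uᶜ, f w ≤ ∑ w ∈ G.neighborFinset u \ U, f w :=
          sum_le_sum_of_ne_zero fun w hw hfw =>
            mem_sdiff.2 ⟨(hvanish w hw hfw).1, mem_compl.1 hw⟩
      _ ≤ ∑ w ∈ G.neighborFinset u \ U, G.maxDegree ^ (r - #U) := sum_le_sum fun w hw =>
          (card_filter_powersetCard_neighborFinset_le U w).trans_eq
            (by rw [erase_eq_of_notMem (mem_sdiff.1 hw).2])
      _ ≤ G.maxDegree * G.maxDegree ^ (r - #U) := by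
          rw [sum_const, smul_eq_mul]
          gcongr
          exact (card_le_card sdiff_subset).trans
            ((G.card_neighborFinset_eq_degree u).trans_le (G.degree_le_maxDegree u))
      _ = G.maxDegree ^ (r + 1 - #U) := by rw [← pow_succ']; congr 1; omega
  · refine (sum_eq_zero fun w hw => by_contra fun hfw => ?_).trans_le (Nat.zero_le _)
    have := (hvanish w hw hfw).2
    omega

lemma card_stars_superset_le {U : Finset V} (hU : U.Nonempty) :
    #{B ∈ stars G r | U ⊆ B.verts.toFinset} ≤ (#U + 1) * G.maxDegree ^ (r + 1 - #U) := by
  obtain ⟨u, hu⟩ := hU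
  set f := fun w => #{L ∈ (G.neighborFinset w).powersetCard r | U ⊆ insert w L}
  have hcentre : ∑ w ∈ U, f w ≤ #U * G.maxDegree ^ (r + 1 - #U) := by
    refine sum_le_card_nsmul U f _ fun w hw =>
      (card_filter_powersetCard_neighborFinset_le U w).trans_eq ?_
    rw [card_erase_of_mem hw]
    have := card_pos.2 ⟨u, hu⟩
    congr 1
    omega
  calc #{B ∈ stars G r | U ⊆ B.verts.toFinset} ≤ ∑ w, f w := card_stars_superset_le_sum U
    _ = ∑ w ∈ U, f w + ∑ w ∈ Uᶜ, f w := (sum_add_sum_compl U f).symm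
    _ ≤ #U * G.maxDegree ^ (r + 1 - #U) + G.maxDegree ^ (r + 1 - #U) :=
        add_le_add hcentre (sum_compl_card_filter_powersetCard_neighborFinset_le hu)
    _ = (#U + 1) * G.maxDegree ^ (r + 1 - #U) := by ring

lemma card_stars_inter_eq_le {A : G.Subgraph} (hA : A ∈ stars G r) {t : ℕ} (ht : 1 ≤ t) :
    #{B ∈ stars G r | #(A.verts.toFinset ∩ B.verts.toFinset) = t} ≤
      (r + 1).choose t * ((t + 1) * G.maxDegree ^ (r + 1 - t)) := by
  calc #{B ∈ stars G r | #(A.verts.toFinset ∩ B.verts.toFinset) = t}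
      ≤ #((A.verts.toFinset.powersetCard t).biUnion
          fun U => {B ∈ stars G r | U ⊆ B.verts.toFinset}) := by
        refine card_le_card fun B hB => ?_
        rw [mem_filter] at hB
        exact mem_biUnion.2 ⟨_, mem_powersetCard.2 ⟨inter_subset_left, hB.2⟩,
          mem_filter.2 ⟨hB.1, inter_subset_right⟩⟩
    _ ≤ ∑ U ∈ A.verts.toFinset.powersetCard t, #{B ∈ stars G r | U ⊆ B.verts.toFinset} :=
        card_biUnion_le
    _ ≤ ∑ _U ∈ A.verts.toFinset.powersetCard t, (t + 1) * G.maxDegree ^ (r + 1 - t) := by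
        refine sum_le_sum fun U hU => ?_
        obtain ⟨-, rfl⟩ := mem_powersetCard.1 hU
        exact card_stars_superset_le (card_pos.1 (by omega))
    _ = (r + 1).choose t * ((t + 1) * G.maxDegree ^ (r + 1 - t)) := by
        rw [sum_const, card_powersetCard, card_verts_of_mem_stars hA, smul_eq_mul]

lemma choose_maxDegree_le_card_stars (hr : r ≠ 0) : G.maxDegree.choose r ≤ #(stars G r) := by
  cases isEmpty_or_nonempty V with
  | inl _ => simp [Nat.choose_eq_zero_of_lt (Nat.pos_of_ne_zero hr)]
  | inr _ =>
    obtain ⟨v, hv⟩ := G.exists_maximal_degree_vertex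
    have hvL : ∀ L ⊆ G.neighborFinset v, v ∉ L := fun L hL h =>
      G.irrefl ((G.mem_neighborFinset v v).1 (hL h))
    rw [hv, ← G.card_neighborFinset_eq_degree, ← card_powersetCard]
    refine card_le_card_of_injOn (starSubgraph G v) (fun L hL => ?_) fun L hL L' hL' h => ?_
    · rw [mem_coe, mem_powersetCard] at hL
      exact starSubgraph_mem_stars hL.1 hL.2
    · rw [mem_coe, mem_powersetCard] at hL hL'
      have := coe_injective (congrArg SimpleGraph.Subgraph.verts h)
      rw [← erase_insert (hvL L hL.1), ← erase_insert (hvL L' hL'.1)]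
      exact congrArg (·.erase v) this

lemma maxDegree_pow_le_mul_card_stars (hr : r ≠ 0) (hN : #(stars G r) ≠ 0) :
    G.maxDegree ^ r ≤ (2 * r) ^ r * #(stars G r) := by
  set Δ := G.maxDegree
  rcases lt_or_ge Δ (2 * r) with h | h
  · calc Δ ^ r ≤ (2 * r) ^ r := Nat.pow_le_pow_left h.le r
      _ ≤ (2 * r) ^ r * #(stars G r) := Nat.le_mul_of_pos_right _ (Nat.pos_of_ne_zero hN)
  · calc Δ ^ r ≤ (2 * (Δ + 1 - r)) ^ r := Nat.pow_le_pow_left (by omega) r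
      _ = 2 ^ r * (Δ + 1 - r) ^ r := mul_pow _ _ _
      _ ≤ 2 ^ r * (r ^ r * Δ.choose r) := by
        gcongr
        calc (Δ + 1 - r) ^ r ≤ Δ.descFactorial r := Nat.pow_sub_le_descFactorial Δ r
          _ = r.factorial * Δ.choose r := Nat.descFactorial_eq_factorial_mul_choose Δ r
          _ ≤ r ^ r * Δ.choose r := by gcongr; exact Nat.factorial_le_pow r
      _ ≤ 2 ^ r * (r ^ r * #(stars G r)) := by gcongr; exact choose_maxDegree_le_card_stars hr
      _ = (2 * r) ^ r * #(stars G r) := by ring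

end Stars

lemma varMono_nonneg {α : Type*} (F : SimpleGraph α) {V : Type*} [Fintype V] [DecidableEq V]
    (G : SimpleGraph V) (c : ℕ) : 0 ≤ varMono F G c :=
  div_nonneg (sum_nonneg fun _ _ => sq_nonneg _) (by positivity)

lemma varMono_eq {α : Type*} (F : SimpleGraph α) {V : Type*} [Fintype V] [DecidableEq V]
    (G : SimpleGraph V) {c : ℕ} (hc : 0 < c) :
    varMono F G c =
      (∑ f : V → Fin c, (monoCopyCount F G f : ℝ) ^ 2) / (c : ℝ) ^ Fintype.card V -
        meanMono F G c ^ 2 := by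
  have hcn : (c : ℝ) ^ Fintype.card V ≠ 0 := by positivity
  have hcard : ((univ : Finset (V → Fin c)).card : ℝ) = (c : ℝ) ^ Fintype.card V := by simp
  rw [varMono, meanMono]
  simp only [sub_sq, sum_add_distrib, sum_sub_distrib, ← sum_mul, ← mul_sum, sum_const, hcard,
    nsmul_eq_mul]
  field_simp
  ring

section Moments

variable {V : Type*} [Fintype V] [DecidableEq V] {G : SimpleGraph V} {r c : ℕ}

lemma monoCopyCount_starGraph_eq (f : V → Fin c) :
    monoCopyCount (starGraph r) G f = #{A ∈ stars G r | IsConstOn f A.verts.toFinset} := by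
  rw [monoCopyCount, Nat.card_eq_fintype_card, Fintype.card_subtype, stars, filter_filter]
  simp [IsConstOn]

lemma sum_monoCopyCount_starGraph :
    ∑ f : V → Fin c, monoCopyCount (starGraph r) G f =
      ∑ A ∈ stars G r, #{f : V → Fin c | IsConstOn f A.verts.toFinset} := by
  simp only [monoCopyCount_starGraph_eq, card_filter]
  exact sum_comm

lemma sum_monoCopyCount_starGraph_sq :
    ∑ f : V → Fin c, monoCopyCount (starGraph r) G f ^ 2 =
      ∑ A ∈ stars G r, ∑ B ∈ stars G r,
        #{f : V → Fin c | IsConstOn f A.verts.toFinset ∧ IsConstOn f B.verts.toFinset} := by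
  simp only [monoCopyCount_starGraph_eq, sq, card_filter, sum_mul_sum, ite_zero_mul_ite_zero,
    mul_one]
  rw [sum_comm]
  exact sum_congr rfl fun A _ => sum_comm

lemma meanMono_starGraph (hc : 0 < c) :
    meanMono (starGraph r) G c = #(stars G r) / (c : ℝ) ^ r := by
  have hA : ∀ A ∈ stars G r, (#{f : V → Fin c | IsConstOn f A.verts.toFinset} : ℝ) =
      c ^ Fintype.card V / c ^ r := by
    intro A hA
    have h := card_filter_isConstOn_mul (c := c)
      (card_pos.1 (by rw [card_verts_of_mem_stars hA]; omega))
    rw [card_verts_of_mem_stars hA, pow_succ, ← mul_assoc, mul_comm c] at h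
    rw [eq_div_iff (by positivity)]
    exact_mod_cast Nat.eq_of_mul_eq_mul_right hc h
  rw [meanMono, ← Nat.cast_sum, sum_monoCopyCount_starGraph, Nat.cast_sum, sum_congr rfl hA,
    sum_const, nsmul_eq_mul]
  field_simp

lemma varMono_starGraph_eq (hc : 0 < c) :
    varMono (starGraph r) G c = ∑ A ∈ stars G r, ∑ B ∈ stars G r,
      ((#{f : V → Fin c | IsConstOn f A.verts.toFinset ∧ IsConstOn f B.verts.toFinset} : ℝ) /
        (c : ℝ) ^ Fintype.card V - 1 / (c : ℝ) ^ (2 * r)) := by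
  have hsq : ∑ f : V → Fin c, (monoCopyCount (starGraph r) G f : ℝ) ^ 2 =
      ∑ A ∈ stars G r, ∑ B ∈ stars G r,
        (#{f : V → Fin c | IsConstOn f A.verts.toFinset ∧ IsConstOn f B.verts.toFinset} :
          ℝ) := by
    exact_mod_cast sum_monoCopyCount_starGraph_sq
  rw [varMono_eq _ _ hc, meanMono_starGraph hc, hsq]
  simp only [sum_sub_distrib, sum_div, sum_const, nsmul_eq_mul]
  ring

lemma sum_stars_pow_card_inter_sub_one_le {A : G.Subgraph} (hA : A ∈ stars G r) :
    ∑ B ∈ stars G r, ((c : ℝ) ^ (#(A.verts.toFinset ∩ B.verts.toFinset) - 1) - 1) ≤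
      ∑ t ∈ Icc 2 (r + 1),
        ((r + 1).choose t : ℝ) * (t + 1) * (G.maxDegree : ℝ) ^ (r + 1 - t) *
          (c : ℝ) ^ (t - 1) := by
  set τ := fun B : G.Subgraph => #(A.verts.toFinset ∩ B.verts.toFinset)
  calc ∑ B ∈ stars G r, ((c : ℝ) ^ (τ B - 1) - 1)
      ≤ ∑ B ∈ stars G r, ∑ t ∈ Icc 2 (r + 1),
          if τ B = t then (c : ℝ) ^ (t - 1) else 0 := by
        refine sum_le_sum fun B _ => ?_
        rw [sum_ite_eq]
        split_ifs with h
        · linarith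
        · have : τ B ≤ r + 1 := (card_le_card inter_subset_left).trans_eq
            (card_verts_of_mem_stars hA)
          rw [show τ B - 1 = 0 by simp only [mem_Icc] at h; omega, pow_zero, sub_self]
    _ = ∑ t ∈ Icc 2 (r + 1), (#{B ∈ stars G r | τ B = t} : ℝ) * (c : ℝ) ^ (t - 1) := by
        rw [sum_comm]
        simp only [sum_ite, sum_const_zero, add_zero, sum_const, nsmul_eq_mul]
    _ ≤ _ := by
        refine sum_le_sum fun t ht => ?_
        rw [mem_Icc] at ht
        gcongr
        have := card_stars_inter_eq_le hA (t := t) (by omega)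
        calc (#{B ∈ stars G r | τ B = t} : ℝ)
            ≤ ((r + 1).choose t * ((t + 1) * G.maxDegree ^ (r + 1 - t)) : ℕ) := by
              exact_mod_cast this
          _ = _ := by push_cast; ring

lemma varMono_starGraph_div_sq_le (hc : 0 < c) (hN : #(stars G r) ≠ 0) :
    varMono (starGraph r) G c / meanMono (starGraph r) G c ^ 2 ≤
      ∑ t ∈ Icc 2 (r + 1), ((r + 1).choose t : ℝ) * (t + 1) *
        ((G.maxDegree : ℝ) ^ (r + 1 - t) * (c : ℝ) ^ (t - 1) / #(stars G r)) := by
  set bound := ∑ t ∈ Icc 2 (r + 1), ((r + 1).choose t : ℝ) * (t + 1) *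
    (G.maxDegree : ℝ) ^ (r + 1 - t) * (c : ℝ) ^ (t - 1)
  have hpair : ∀ A ∈ stars G r, ∀ B ∈ stars G r,
      (#{f : V → Fin c | IsConstOn f A.verts.toFinset ∧ IsConstOn f B.verts.toFinset} : ℝ) /
        (c : ℝ) ^ Fintype.card V - 1 / (c : ℝ) ^ (2 * r) ≤
      ((c : ℝ) ^ (#(A.verts.toFinset ∩ B.verts.toFinset) - 1) - 1) / (c : ℝ) ^ (2 * r) := by
    intro A hA B hB
    rw [sub_div, sub_le_sub_iff_right, div_le_div_iff₀ (by positivity) (by positivity)]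
    exact_mod_cast card_filter_isConstOn_and_mul_pow_le (card_verts_of_mem_stars hA)
      (card_verts_of_mem_stars hB) hc
  have hvar : varMono (starGraph r) G c ≤ #(stars G r) * bound / (c : ℝ) ^ (2 * r) := by
    rw [varMono_starGraph_eq hc, mul_div_assoc, ← nsmul_eq_mul, ← sum_const]
    refine sum_le_sum fun A hA => ((sum_le_sum (hpair A hA)).trans_eq (sum_div ..).symm).trans ?_
    gcongr
    exact sum_stars_pow_card_inter_sub_one_le hA
  calc varMono (starGraph r) G c / meanMono (starGraph r) G c ^ 2
      ≤ #(stars G r) * bound / (c : ℝ) ^ (2 * r) / (#(stars G r) / (c : ℝ) ^ r) ^ 2 := by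
        rw [meanMono_starGraph hc]
        gcongr
    _ = bound / #(stars G r) := by
        field_simp
        ring
    _ = _ := by
        rw [sum_div]
        exact sum_congr rfl fun t _ => by ring

end Moments

section Chebyshev

variable {α : Type*} (F : SimpleGraph α) {V : Type*} [Fintype V] [DecidableEq V]
  (G : SimpleGraph V) {c : ℕ}

lemma card_lt_abs_sub_meanMono_div_le (hc : 0 < c) {δ : ℝ} (hδ : 0 < δ) :
    (Nat.card {f : V → Fin c // δ < |(monoCopyCount F G f : ℝ) - meanMono F G c|} : ℝ) /
        (c : ℝ) ^ Fintype.card V ≤ varMono F G c / δ ^ 2 := by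
  have h := card_lt_abs_sub_mul_sq_le (fun f : V → Fin c => (monoCopyCount F G f : ℝ))
    (meanMono F G c) hδ.le
  rw [Nat.card_eq_fintype_card, Fintype.card_subtype, varMono, div_div,
    div_le_div_iff₀ (by positivity) (by positivity)]
  calc _ = (#{f : V → Fin c | δ < |(monoCopyCount F G f : ℝ) - meanMono F G c|} : ℝ) *
        δ ^ 2 * (c : ℝ) ^ Fintype.card V := by ring
    _ ≤ _ := by gcongr

lemma tendsto_card_div_of_lt_abs_sub {ι : Type*} {l : Filter ι} {V : ι → Type*}
    [∀ i, Fintype (V i)] [∀ i, DecidableEq (V i)] {G : ∀ i, SimpleGraph (V i)}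
    {c : ι → ℕ} (P : ∀ i, (V i → Fin (c i)) → Prop) {κ : ℝ} (hκ : 0 < κ)
    (hc : ∀ᶠ i in l, 0 < c i)
    (hvar : Tendsto (fun i => varMono F (G i) (c i) / meanMono F (G i) (c i) ^ 2) l (nhds 0))
    (hμ : ∀ᶠ i in l, 0 < meanMono F (G i) (c i))
    (hP : ∀ᶠ i in l, ∀ f, P i f →
      κ * meanMono F (G i) (c i) < |(monoCopyCount F (G i) f : ℝ) - meanMono F (G i) (c i)|) :
    Tendsto (fun i => (Nat.card {f // P i f} : ℝ) / (c i : ℝ) ^ Fintype.card (V i)) l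
      (nhds 0) := by
  refine squeeze_zero' (.of_forall fun i => by positivity)
    ((hc.and (hμ.and hP)).mono fun i ⟨hci, hμi, hPi⟩ => ?_)
    (by simpa using hvar.div_const (κ ^ 2))
  calc (Nat.card {f // P i f} : ℝ) / (c i : ℝ) ^ Fintype.card (V i)
      ≤ (Nat.card {f : V i → Fin (c i) // κ * meanMono F (G i) (c i) <
          |(monoCopyCount F (G i) f : ℝ) - meanMono F (G i) (c i)|} : ℝ) /
          (c i : ℝ) ^ Fintype.card (V i) := by
        gcongr
        exact Nat.card_le_card_of_injective _ (Subtype.impEmbedding _ _ hPi).injective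
    _ ≤ varMono F (G i) (c i) / (κ * meanMono F (G i) (c i)) ^ 2 :=
        card_lt_abs_sub_meanMono_div_le F (G i) hci (by positivity)
    _ = varMono F (G i) (c i) / meanMono F (G i) (c i) ^ 2 / κ ^ 2 := by ring

end Chebyshev

section Asymptotics

variable {V : Type*} [Fintype V] [DecidableEq V] {G : SimpleGraph V} {r c : ℕ}

lemma maxDegree_pow_mul_pow_div_card_stars_pow_le (hc : 0 < c) (hN : #(stars G r) ≠ 0)
    (hr : r ≠ 0) {t : ℕ} (ht : 1 ≤ t) (htr : t ≤ r + 1) :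
    ((G.maxDegree : ℝ) ^ (r + 1 - t) * (c : ℝ) ^ (t - 1) / #(stars G r)) ^ r ≤
      ((2 * r : ℝ) ^ r) ^ (r + 1 - t) * (meanMono (starGraph r) G c)⁻¹ ^ (t - 1) := by
  have hsplit : ∀ (x y N : ℝ) (a b : ℕ),
      (x ^ a * y ^ b / N) ^ (a + b) = (x ^ (a + b) / N) ^ a * (y ^ (a + b) / N) ^ b :=
    fun _ _ _ _ _ => by ring
  have hΔ : (G.maxDegree : ℝ) ^ r / #(stars G r) ≤ (2 * r : ℝ) ^ r := by
    rw [div_le_iff₀ (by positivity)]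
    exact_mod_cast maxDegree_pow_le_mul_card_stars hr hN
  have key := hsplit (G.maxDegree) c #(stars G r) (r + 1 - t) (t - 1)
  rw [show r + 1 - t + (t - 1) = r by omega] at key
  rw [key, meanMono_starGraph hc, inv_div]
  gcongr

lemma tendsto_varMono_starGraph_div_sq {ι : Type*} {l : Filter ι} {V : ι → Type*}
    [∀ i, Fintype (V i)] [∀ i, DecidableEq (V i)] {G : ∀ i, SimpleGraph (V i)}
    {c : ι → ℕ} (hc : ∀ᶠ i in l, 0 < c i)
    (hmean : Tendsto (fun i => meanMono (starGraph r) (G i) (c i)) l atTop) :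
    Tendsto (fun i => varMono (starGraph r) (G i) (c i) /
      meanMono (starGraph r) (G i) (c i) ^ 2) l (nhds 0) := by
  have hN : ∀ᶠ i in l, #(stars (G i) r) ≠ 0 :=
    (hc.and (hmean.eventually_gt_atTop 0)).mono fun i ⟨hci, hμ⟩ hN => by
      rw [meanMono_starGraph hci, hN] at hμ
      simp at hμ
  have hterm : ∀ t ∈ Icc 2 (r + 1), Tendsto (fun i => ((G i).maxDegree : ℝ) ^ (r + 1 - t) *
      (c i : ℝ) ^ (t - 1) / #(stars (G i) r)) l (nhds 0) := by
    intro t ht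
    rw [mem_Icc] at ht
    refine tendsto_zero_of_tendsto_pow (r := r) (by omega) (.of_forall fun i => by positivity) ?_
    refine squeeze_zero' (.of_forall fun i => by positivity)
      ((hc.and hN).mono fun i ⟨hci, hNi⟩ => maxDegree_pow_mul_pow_div_card_stars_pow_le hci hNi (by omega) (by omega) ht.2) ?_
    simpa [zero_pow (by omega : t - 1 ≠ 0)] using
      (hmean.inv_tendsto_atTop.pow (t - 1)).const_mul (((2 * r : ℝ) ^ r) ^ (r + 1 - t))
  refine squeeze_zero' (.of_forall fun i => div_nonneg (varMono_nonneg ..) (sq_nonneg _))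
    ((hc.and hN).mono fun i ⟨hci, hNi⟩ => varMono_starGraph_div_sq_le hci hNi) ?_
  simpa using tendsto_finsetSum _ fun t ht =>
    (hterm t ht).const_mul (((r + 1).choose t : ℝ) * (t + 1))

end Asymptotics

end

theorem stmt9_general (r : ℕ) (V : ℕ → Type) [∀ n, Fintype (V n)]
    [∀ n, DecidableEq (V n)] (G : ∀ n, SimpleGraph (V n)) (c : ℕ → ℕ)
    (hc : Tendsto c atTop atTop)
    (hmean : Tendsto (fun n => meanMono (starGraph r) (G n) (c n)) atTop atTop) :
    Tendsto (fun n => varMono (starGraph r) (G n) (c n) /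
        (meanMono (starGraph r) (G n) (c n)) ^ 2) atTop (nhds 0) ∧
    (∀ ε : ℝ, 0 < ε →
      Tendsto (fun n =>
        (Nat.card {f : V n → Fin (c n) //
            ε < |(monoCopyCount (starGraph r) (G n) f : ℝ) /
                  meanMono (starGraph r) (G n) (c n) - 1|} : ℝ) /
          (c n : ℝ) ^ Fintype.card (V n)) atTop (nhds 0)) ∧
    (∀ M : ℝ,
      Tendsto (fun n =>
        (Nat.card {f : V n → Fin (c n) //
            (monoCopyCount (starGraph r) (G n) f : ℝ) ≤ M} : ℝ) /
          (c n : ℝ) ^ Fintype.card (V n)) atTop (nhds 0)) := by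
  have hc₀ : ∀ᶠ n in atTop, 0 < c n := hc.eventually_gt_atTop 0
  have hμ : ∀ᶠ n in atTop, 0 < meanMono (starGraph r) (G n) (c n) :=
    hmean.eventually_gt_atTop 0
  have hvar := tendsto_varMono_starGraph_div_sq hc₀ hmean
  refine ⟨hvar, fun ε hε => ?_, fun M => ?_⟩
  · refine tendsto_card_div_of_lt_abs_sub _ _ hε hc₀ hvar hμ ?_
    filter_upwards [hμ] with n hμn f hf
    rwa [div_sub_one hμn.ne', abs_div, abs_of_pos hμn, lt_div_iff₀ hμn] at hf
  · refine tendsto_card_div_of_lt_abs_sub _ _ one_half_pos hc₀ hvar hμ ?_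
    filter_upwards [hmean.eventually_gt_atTop (2 * M)] with n hμn f hf
    rw [abs_sub_comm]
    exact (by linarith : _ < _).trans_le (le_abs_self _)

/-- If `G_n` is colored uniformly with `c_n → ∞` colors and `E[T(K_{1,r},G_n)] → ∞`, then
`Var T = o((E T)^2)`, `T/E[T] → 1` in probability, and `T → ∞` in probability. -/
theorem stmt9 (r : ℕ) (hr : 1 ≤ r) (V : ℕ → Type) [∀ n, Fintype (V n)]
    [∀ n, DecidableEq (V n)] (G : ∀ n, SimpleGraph (V n)) (c : ℕ → ℕ)
    (hc : Tendsto c atTop atTop)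
    (hmean : Tendsto (fun n => meanMono (starGraph r) (G n) (c n)) atTop atTop) :
    Tendsto (fun n => varMono (starGraph r) (G n) (c n) /
        (meanMono (starGraph r) (G n) (c n)) ^ 2) atTop (nhds 0) ∧
    (∀ ε : ℝ, 0 < ε →
      Tendsto (fun n =>
        (Nat.card {f : V n → Fin (c n) //
            ε < |(monoCopyCount (starGraph r) (G n) f : ℝ) /
                  meanMono (starGraph r) (G n) (c n) - 1|} : ℝ) /
          (c n : ℝ) ^ Fintype.card (V n)) atTop (nhds 0)) ∧
    (∀ M : ℝ,
      Tendsto (fun n =>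
        (Nat.card {f : V n → Fin (c n) //
            (monoCopyCount (starGraph r) (G n) f : ℝ) ≤ M} : ℝ) /
          (c n : ℝ) ^ Fintype.card (V n)) atTop (nhds 0)) :=
  stmt9_general r V G c hc hmean
end

section
/- Let H be a connected graph that is not a star graph, and let P_n(H) be the pyramid of H of height n: the union of n copies H_1,...,H_n of H, all sharing the same first |V(H)|-1 vertices {1,...,|V(H)|-1}, with the last vertex replaced by distinct new vertices z_1,...,z_n. Then every copy of H inside P_n(H) passes through at least two vertices of the base set {1,...,|V(H)|-1}. -/
/-!
The apex vertices of `P_n(H)` are pairwise non-adjacent, so every edge of a copy of `H` in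
`P_n(H)` has an endpoint in the base. If the copy met the base in at most one vertex `c`, every
edge of `H` would contain the vertex corresponding to `c`, and a connected graph all of whose
edges pass through one vertex is a star.
-/

open Finset

/-- The pyramid of `H` of height `n`: the union of `n` copies of `H`, all sharing the same
base vertices (the first `m = |V(H)|-1` vertices of `H`), the apex vertex of `H` being
replaced by `n` distinct new vertices. -/
def pyramid {m : ℕ} (H : SimpleGraph (Fin (m + 1))) (n : ℕ) : SimpleGraph (Fin m ⊕ Fin n) :=
  SimpleGraph.fromRel (fun x y =>
    match x, y with
    | Sum.inl u, Sum.inl v => H.Adj u.castSucc v.castSucc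
    | Sum.inl u, Sum.inr _ => H.Adj u.castSucc (Fin.last m)
    | _, _ => False)

namespace SimpleGraph

variable {V : Type*} {G : SimpleGraph V}

theorem exists_forall_adj_eq_of_subsingleton [Nonempty V] {S : Set V} (hS : S.Subsingleton)
    (hcover : ∀ u v, G.Adj u v → u ∈ S ∨ v ∈ S) : ∃ c, ∀ u v, G.Adj u v → u = c ∨ v = c := by
  rcases hS.eq_empty_or_singleton with rfl | ⟨c, rfl⟩
  · exact ⟨Classical.arbitrary V, fun u v huv => by simpa using hcover u v huv⟩
  · exact ⟨c, hcover⟩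

theorem Connected.adj_of_forall_adj_eq (hconn : G.Connected) {c : V}
    (hc : ∀ u v, G.Adj u v → u = c ∨ v = c) {u : V} (hu : u ≠ c) : G.Adj u c := by
  obtain ⟨w⟩ := hconn u c
  cases w with
  | nil => exact absurd rfl hu
  | @cons _ x _ hux _ =>
    obtain hx : x = c := (hc u x hux).resolve_left hu
    exact hx ▸ hux

theorem Connected.nonempty_iso_starGraph {m : ℕ} {G : SimpleGraph (Fin (m + 1))}
    (hconn : G.Connected) {c : Fin (m + 1)} (hc : ∀ u v, G.Adj u v → u = c ∨ v = c) :
    Nonempty (G ≃g _root_.starGraph m) := by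
  have hswap (a : Fin (m + 1)) : Equiv.swap c 0 a = 0 ↔ a = c := by
    rw [Equiv.swap_apply_eq_iff, Equiv.swap_apply_right]
  refine ⟨⟨Equiv.swap c 0, fun {a b} => ?_⟩⟩
  simp only [_root_.starGraph, fromRel_adj, (Equiv.swap c 0).injective.ne_iff, hswap]
  constructor
  · rintro ⟨hab, rfl | rfl⟩
    · exact (hconn.adj_of_forall_adj_eq hc hab.symm).symm
    · exact hconn.adj_of_forall_adj_eq hc hab
  · exact fun h => ⟨h.ne, hc a b h⟩

end SimpleGraph

theorem pyramid_adj_mem_range_inl {m n : ℕ} {H : SimpleGraph (Fin (m + 1))}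
    {x y : Fin m ⊕ Fin n} (h : (pyramid H n).Adj x y) :
    x ∈ Set.range Sum.inl ∨ y ∈ Set.range Sum.inl := by
  rcases x with u | a <;> rcases y with v | b <;> simp_all [pyramid]

/-- If `H` is connected and not a star graph, then every copy of `H` inside the pyramid
`P_n(H)` passes through at least two base vertices. -/
theorem stmt10 {m n : ℕ} (H : SimpleGraph (Fin (m + 1))) (hconn : H.Connected)
    (hstar : ∀ r : ℕ, IsEmpty (H ≃g starGraph r)) :
    ∀ A : (pyramid H n).Subgraph, Nonempty (A.coe ≃g H) →
      2 ≤ (A.verts ∩ Set.range (Sum.inl : Fin m → Fin m ⊕ Fin n)).ncard := by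
  rintro A ⟨e⟩
  by_contra! hlt
  have hbase : (A.verts ∩ Set.range Sum.inl).Subsingleton :=
    Set.ncard_le_one_iff_subsingleton.mp (by omega)
  obtain ⟨c, hc⟩ := SimpleGraph.exists_forall_adj_eq_of_subsingleton (G := H)
    (hbase.preimage (Subtype.val_injective.comp e.symm.injective)) fun u v huv =>
      (pyramid_adj_mem_range_inl (A.adj_sub (e.symm.map_rel_iff.mpr huv))).imp
        (⟨(e.symm u).2, ·⟩) (⟨(e.symm v).2, ·⟩)
  exact (hstar m).false (hconn.nonempty_iso_starGraph hc).some
end
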